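/- arXiv:2008.00843 — 10 statements merged into one kernel-verified Lean document; each statement's English description precedes it below -/
import Mathlib

section
/- Let (A, f) and (B, g) be finite dynamical systems and let (C, t) = (A × B, Prod.map f g) be their product. Then for every state (a, b) ∈ C, the height of (a, b) in (C, t) equals max(h(a), h(b)), where h(a) is the height of a in (A, f) and h(b) is the height of b in (B, g). -/
/-- A state `x` of a dynamical system `(A, f)` is periodic if some positive
iterate of `f` fixes it. -/
def IsPeriodicState {A : Type*} (f : A → A) (x : A) : Prop :=
  ∃ k : ℕ, 1 ≤ k ∧ f^[k] x = x

/-- The height of a state `x`: the least `h` such that `f^[h] x` is periodic. -/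
noncomputable def height {A : Type*} (f : A → A) (x : A) : ℕ :=
  sInf {h : ℕ | IsPeriodicState f (f^[h] x)}

lemma isPeriodicState_iterate {A : Type*} {f : A → A} {x : A}
    (h : IsPeriodicState f x) (n : ℕ) : IsPeriodicState f (f^[n] x) := by
  obtain ⟨k, hk1, hk⟩ := h
  exact ⟨k, hk1, by rw [← Function.iterate_add_apply, Nat.add_comm,
    Function.iterate_add_apply, hk]⟩

lemma heightSet_nonempty {A : Type*} [Finite A] (f : A → A) (x : A) :
    {h : ℕ | IsPeriodicState f (f^[h] x)}.Nonempty := by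
  obtain ⟨m, n, hmn, h⟩ := Finite.exists_ne_map_eq_of_infinite (fun n => f^[n] x)
  rcases hmn.lt_or_gt with hlt | hlt
  · exact ⟨m, n - m, by omega, by
      rw [← Function.iterate_add_apply]
      simpa [Nat.sub_add_cancel hlt.le] using h.symm⟩
  · exact ⟨n, m - n, by omega, by
      rw [← Function.iterate_add_apply]
      simpa [Nat.sub_add_cancel hlt.le] using h⟩

lemma mem_heightSet_iff {A : Type*} [Finite A] (f : A → A) (x : A) (n : ℕ) :
    IsPeriodicState f (f^[n] x) ↔ height f x ≤ n := by
  constructor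
  · intro h; exact Nat.sInf_le h
  · intro h
    have hmem : IsPeriodicState f (f^[height f x] x) :=
      Nat.sInf_mem (heightSet_nonempty f x)
    have := isPeriodicState_iterate hmem (n - height f x)
    rwa [← Function.iterate_add_apply, Nat.sub_add_cancel h] at this

lemma isPeriodicState_prod_iff {A B : Type*} (f : A → A) (g : B → B) (a : A) (b : B) :
    IsPeriodicState (Prod.map f g) (a, b) ↔ IsPeriodicState f a ∧ IsPeriodicState g b := by
  constructor
  · rintro ⟨k, hk1, hk⟩
    rw [Prod.map_iterate] at hk
    exact ⟨⟨k, hk1, congrArg Prod.fst hk⟩, ⟨k, hk1, congrArg Prod.snd hk⟩⟩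
  · rintro ⟨⟨k, hk1, hk⟩, ⟨l, hl1, hl⟩⟩
    refine ⟨k * l, Nat.one_le_iff_ne_zero.2 (by positivity), ?_⟩
    rw [Prod.map_iterate, Prod.map_apply]
    have h1 : f^[k * l] a = a := by
      rw [Function.iterate_mul]; exact Function.iterate_fixed hk l
    have h2 : g^[k * l] b = b := by
      rw [Nat.mul_comm, Function.iterate_mul]; exact Function.iterate_fixed hl k
    rw [h1, h2]

/-- In the product of two finite dynamical systems, the height of a state
`(a, b)` is the maximum of the heights of `a` and `b`. -/
theorem height_prod_eq_max {A B : Type*} [Fintype A] [Fintype B]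
    (f : A → A) (g : B → B) (a : A) (b : B) :
    height (Prod.map f g) (a, b) = max (height f a) (height g b) := by
  refine le_antisymm ?_ ?_
  · apply Nat.sInf_le
    show IsPeriodicState (Prod.map f g) ((Prod.map f g)^[_] (a, b))
    rw [Prod.map_iterate, Prod.map_apply, isPeriodicState_prod_iff]
    exact ⟨(mem_heightSet_iff f a _).2 (le_max_left _ _),
      (mem_heightSet_iff g b _).2 (le_max_right _ _)⟩
  · have hmem := Nat.sInf_mem (heightSet_nonempty (Prod.map f g) (a, b))
    rw [Set.mem_setOf_eq, Prod.map_iterate, Prod.map_apply,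
      isPeriodicState_prod_iff] at hmem
    exact max_le ((mem_heightSet_iff f a _).1 hmem.1)
      ((mem_heightSet_iff g b _).1 hmem.2)
end

section
/- Let (A, f) and (B, g) be finite dynamical systems and let C = (A × B, Prod.map f g) be their product. Then for every k ∈ ℕ, the number of states of C of height k satisfies |C|_k = |A|_k · |B|_{≤k} + |B|_k · |A|_{≤k} − |A|_k · |B|_k, where |D|_{≤k} = ∑_{i=0}^{k} |D|_i. -/
/-- The number of states of height `i` in the dynamical system `(A, f)`. -/
noncomputable def heightCount {A : Type*} (f : A → A) (i : ℕ) : ℕ :=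
  Nat.card {x : A // height f x = i}

/-- The number of states of height at most `k` in the dynamical system `(A, f)`. -/
noncomputable def heightCountLE {A : Type*} (f : A → A) (k : ℕ) : ℕ :=
  ∑ i ∈ Finset.range (k + 1), heightCount f i

/-!
A pair `(x, y)` is periodic for `Prod.map f g` iff both coordinates are, and periodicity is
preserved by `f`, so `height (x, y) = max (height x) (height y)`. A state of the product thus
has height `k` iff one coordinate has height `k` and the other height at most `k`; the count
follows by inclusion–exclusion, the overlap being the pairs where both heights equal `k`.
-/

open Function Finset

theorem isPeriodicState_iff_mem_periodicPts {A : Type*} {f : A → A} {x : A} :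
    IsPeriodicState f x ↔ x ∈ periodicPts f :=
  Iff.rfl

theorem Function.prodMap_mem_periodicPts_iff {A B : Type*} {f : A → A} {g : B → B}
    {x : A} {y : B} :
    (x, y) ∈ periodicPts (Prod.map f g) ↔ x ∈ periodicPts f ∧ y ∈ periodicPts g := by
  simp only [← minimalPeriod_pos_iff_mem_periodicPts, minimalPeriod_prodMap, Nat.lcm_pos_iff]

section Height

variable {A : Type*} {f : A → A} {x : A}

theorem Function.iterate_mem_periodicPts_of_le {h h' : ℕ} (hle : h ≤ h')
    (hx : f^[h] x ∈ periodicPts f) : f^[h'] x ∈ periodicPts f := by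
  obtain ⟨n, hn, hper⟩ := hx
  refine ⟨n, hn, ?_⟩
  rw [← Nat.sub_add_cancel hle, iterate_add_apply]
  exact hper.apply_iterate _

theorem Function.exists_iterate_mem_periodicPts [Finite A] (f : A → A) (x : A) :
    ∃ h, f^[h] x ∈ periodicPts f := by
  obtain ⟨m, n, hne, heq⟩ := Finite.exists_ne_map_eq_of_infinite (f^[·] x)
  wlog hlt : m < n generalizing m n
  · exact this n m hne.symm heq.symm (by omega)
  refine ⟨m, n - m, by omega, ?_⟩
  change f^[n - m] (f^[m] x) = f^[m] x
  rw [← iterate_add_apply, Nat.sub_add_cancel hlt.le]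
  exact heq.symm

theorem iterate_mem_periodicPts_iff_height_le [Finite A] {h : ℕ} :
    f^[h] x ∈ periodicPts f ↔ height f x ≤ h := by
  simp only [height, isPeriodicState_iff_mem_periodicPts]
  exact ⟨fun hx ↦ Nat.sInf_le hx, fun hle ↦
    iterate_mem_periodicPts_of_le hle (Nat.sInf_mem (exists_iterate_mem_periodicPts f x))⟩

theorem height_prodMap {B : Type*} [Finite A] [Finite B] (g : B → B) (y : B) :
    height (Prod.map f g) (x, y) = max (height f x) (height g y) :=
  eq_of_forall_ge_iff fun h ↦ by
    rw [← iterate_mem_periodicPts_iff_height_le, Prod.map_iterate, Prod.map_apply,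
      prodMap_mem_periodicPts_iff, iterate_mem_periodicPts_iff_height_le,
      iterate_mem_periodicPts_iff_height_le, max_le_iff]

theorem heightCount_eq_card [Fintype A] (f : A → A) (i : ℕ) :
    heightCount f i = #{x | height f x = i} := by
  rw [heightCount, Nat.card_eq_fintype_card, Fintype.card_subtype]

theorem heightCountLE_eq_card [Fintype A] (f : A → A) (k : ℕ) :
    heightCountLE f k = #{x | height f x ≤ k} := by
  simp only [heightCountLE, heightCount_eq_card,
    sum_card_fiberwise_eq_card_filter, mem_range, Nat.lt_succ_iff]

end Height

theorem Finset.card_filter_max_eq_add_card_mul_card {α β ι : Type*} [Fintype α] [Fintype β]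
    [LinearOrder ι] (u : α → ι) (v : β → ι) (k : ι) :
    #{p : α × β | max (u p.1) (v p.2) = k} + #{a | u a = k} * #{b | v b = k} =
      #{a | u a = k} * #{b | v b ≤ k} + #{b | v b = k} * #{a | u a ≤ k} := by
  classical
  set uEq : Finset α := {a | u a = k}
  set uLe : Finset α := {a | u a ≤ k}
  set vEq : Finset β := {b | v b = k}
  set vLe : Finset β := {b | v b ≤ k}
  have hunion : ({p | max (u p.1) (v p.2) = k} : Finset (α × β)) = uEq ×ˢ vLe ∪ uLe ×ˢ vEq := by
    ext ⟨a, b⟩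
    simp only [mem_filter_univ, mem_union, mem_product]
    grind
  have hinter : uEq ×ˢ vLe ∩ uLe ×ˢ vEq = uEq ×ˢ vEq := by
    ext ⟨a, b⟩
    simp only [mem_inter, mem_product]
    grind
  rw [hunion, ← card_product, ← hinter, card_union_add_card_inter, card_product, card_product,
    mul_comm #uLe]

/-- Counting the states of height `k` in a product of two finite dynamical
systems: `|C|_k = |A|_k · |B|_{≤k} + |B|_k · |A|_{≤k} − |A|_k · |B|_k`. -/
theorem heightCount_prod {A B : Type*} [Fintype A] [Fintype B]
    (f : A → A) (g : B → B) (k : ℕ) :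
    heightCount (Prod.map f g) k =
      heightCount f k * heightCountLE g k + heightCount g k * heightCountLE f k
        - heightCount f k * heightCount g k := by
  have hcount := card_filter_max_eq_add_card_mul_card (height f) (height g) k
  simp only [← height_prodMap, ← heightCount_eq_card, ← heightCountLE_eq_card] at hcount
  omega
end

section
/- Let (A, f) and (B, g) be finite dynamical systems. Then the profile of their product (A × B, Prod.map f g) equals the product of their profiles: for every i ∈ ℕ, |A × B|_i = prof(A,f)(i) · ∑_{j=0}^{i} prof(B,g)(j) + prof(B,g)(i) · ∑_{j=0}^{i} prof(A,f)(j) − prof(A,f)(i) · prof(B,g)(i). -/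
/-- The profile of `(A, f)`: the sequence counting the states of each height. -/
noncomputable def profile {A : Type*} (f : A → A) : ℕ → ℕ :=
  fun i => Nat.card {x : A // height f x = i}

/-- The product of two profiles:
`(p × q)(i) = p(i)·∑_{j≤i} q(j) + q(i)·∑_{j≤i} p(j) − p(i)·q(i)`. -/
def pmul (p q : ℕ → ℕ) : ℕ → ℕ := fun i =>
  p i * (∑ j ∈ Finset.range (i + 1), q j) + q i * (∑ j ∈ Finset.range (i + 1), p j)
    - p i * q i

lemma isPeriodicState_apply {A : Type*} {f : A → A} {x : A}
    (h : IsPeriodicState f x) : IsPeriodicState f (f x) := by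
  obtain ⟨k, hk, hfk⟩ := h
  exact ⟨k, hk, by rw [← Function.iterate_succ_apply, Function.iterate_succ_apply', hfk]⟩

lemma isPeriodicState_iterate_mono {A : Type*} {f : A → A} {x : A} {h h' : ℕ}
    (hh : h ≤ h') (hp : IsPeriodicState f (f^[h] x)) : IsPeriodicState f (f^[h'] x) := by
  induction h' , hh using Nat.le_induction with
  | base => exact hp
  | succ n hn ih =>
    rw [Function.iterate_succ_apply']
    exact isPeriodicState_apply ih

lemma exists_isPeriodicState {A : Type*} [Finite A] (f : A → A) (x : A) :
    ∃ h, IsPeriodicState f (f^[h] x) := by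
  obtain ⟨m, n, hmn, he⟩ := Finite.exists_ne_map_eq_of_infinite (fun n : ℕ => f^[n] x)
  rcases hmn.lt_or_gt with h | h
  · exact ⟨m, n - m, by omega, by
      rw [← Function.iterate_add_apply]
      simpa [Nat.sub_add_cancel h.le] using he.symm⟩
  · exact ⟨n, m - n, by omega, by
      rw [← Function.iterate_add_apply]
      simpa [Nat.sub_add_cancel h.le] using he⟩

lemma height_le_iff {A : Type*} [Finite A] {f : A → A} {x : A} {h : ℕ} :
    height f x ≤ h ↔ IsPeriodicState f (f^[h] x) := by
  constructor
  · intro hle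
    have hne : {h : ℕ | IsPeriodicState f (f^[h] x)}.Nonempty := exists_isPeriodicState f x
    exact isPeriodicState_iterate_mono hle (Nat.sInf_mem hne)
  · intro hp
    exact Nat.sInf_le hp

lemma isPeriodicState_prod {A B : Type*} {f : A → A} {g : B → B} {a : A} {b : B} :
    IsPeriodicState (Prod.map f g) (a, b) ↔ IsPeriodicState f a ∧ IsPeriodicState g b := by
  constructor
  · rintro ⟨k, hk, he⟩
    rw [Prod.map_iterate] at he
    exact ⟨⟨k, hk, congrArg Prod.fst he⟩, ⟨k, hk, congrArg Prod.snd he⟩⟩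
  · rintro ⟨⟨k, hk, he⟩, ⟨l, hl, hf⟩⟩
    refine ⟨k * l, Nat.one_le_iff_ne_zero.2 (by positivity), ?_⟩
    rw [Prod.map_iterate, Prod.map_apply]
    have h1 : f^[k * l] a = a := by
      rw [Function.iterate_mul]; exact Function.iterate_fixed he l
    have h2 : g^[k * l] b = b := by
      rw [mul_comm, Function.iterate_mul]; exact Function.iterate_fixed hf k
    rw [h1, h2]

lemma height_prod {A B : Type*} [Finite A] [Finite B] (f : A → A) (g : B → B) (a : A) (b : B) :
    height (Prod.map f g) (a, b) = max (height f a) (height g b) := by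
  have key : ∀ n : ℕ, height (Prod.map f g) (a, b) ≤ n ↔ max (height f a) (height g b) ≤ n := by
    intro n
    rw [height_le_iff, Prod.map_iterate, Prod.map_apply, isPeriodicState_prod,
      max_le_iff, ← height_le_iff, ← height_le_iff]
  exact le_antisymm ((key _).2 le_rfl) ((key _).1 le_rfl)

lemma profile_eq_card_filter {A : Type*} [Fintype A] (f : A → A) (i : ℕ) :
    profile f i = (Finset.univ.filter fun x => height f x = i).card := by
  simp [profile, Nat.card_eq_fintype_card, Fintype.card_subtype]

lemma sum_profile {A : Type*} [Fintype A] (f : A → A) (i : ℕ) :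
    ∑ j ∈ Finset.range (i + 1), profile f j
      = (Finset.univ.filter fun x => height f x ≤ i).card := by
  rw [Finset.card_eq_sum_card_fiberwise (f := height f) (t := Finset.range (i + 1))
    (fun x hx => by simp_all [Nat.lt_succ_iff])]
  refine Finset.sum_congr rfl fun j hj => ?_
  rw [profile_eq_card_filter, Finset.filter_filter]
  congr 1
  ext x
  simp only [Finset.mem_filter, Finset.mem_range, Nat.lt_succ_iff, Finset.mem_univ,
    true_and] at hj ⊢
  omega

/-- The profile of a product of finite dynamical systems is the product of
their profiles. -/
theorem profile_of_prod {A B : Type*} [Fintype A] [Fintype B]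
    (f : A → A) (g : B → B) (i : ℕ) :
    profile (Prod.map f g) i = pmul (profile f) (profile g) i := by
  classical
  set sA := Finset.univ.filter fun a : A => height f a = i with hsA
  set tA := Finset.univ.filter fun a : A => height f a ≤ i with htA
  set sB := Finset.univ.filter fun b : B => height g b = i with hsB
  set tB := Finset.univ.filter fun b : B => height g b ≤ i with htB
  have hmain : (Finset.univ.filter fun z : A × B => height (Prod.map f g) z = i)
      = (sA ×ˢ tB) ∪ (tA ×ˢ sB) := by
    ext ⟨a, b⟩
    simp only [Finset.mem_filter, Finset.mem_univ, true_and, Finset.mem_union,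
      Finset.mem_product, hsA, htA, hsB, htB, height_prod]
    omega
  have hinter : (sA ×ˢ tB) ∩ (tA ×ˢ sB) = sA ×ˢ sB := by
    ext ⟨a, b⟩
    simp only [Finset.mem_inter, Finset.mem_product, Finset.mem_filter, Finset.mem_univ,
      true_and, hsA, htA, hsB, htB]
    omega
  have hcard := Finset.card_union_add_card_inter (sA ×ˢ tB) (tA ×ˢ sB)
  rw [hinter] at hcard
  have hPi : profile f i = sA.card := profile_eq_card_filter f i
  have hQi : profile g i = sB.card := profile_eq_card_filter g i
  have hP : ∑ j ∈ Finset.range (i + 1), profile f j = tA.card := sum_profile f i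
  have hQ : ∑ j ∈ Finset.range (i + 1), profile g j = tB.card := sum_profile g i
  rw [pmul, profile_eq_card_filter, hmain, hPi, hQi, hP, hQ]
  simp only [Finset.card_product] at hcard ⊢
  have hcomm : sB.card * tA.card = tA.card * sB.card := Nat.mul_comm _ _
  have hsub : sB ⊆ tB := by
    intro b hb
    simp only [hsB, htB, Finset.mem_filter, Finset.mem_univ, true_and] at hb ⊢
    omega
  have hle : sA.card * sB.card ≤ sA.card * tB.card :=
    Nat.mul_le_mul_left _ (Finset.card_le_card hsub)
  omega
end

section
/- The set P of profiles is a commutative semiring under profile addition and profile multiplication. Precisely: the pointwise sum and the product (p × q)(i) = p(i)·∑_{j≤i} q(j) + q(i)·∑_{j≤i} p(j) − p(i)·q(i) of two profiles are again profiles; addition is associative and commutative with neutral element 0_P; multiplication is associative and commutative with neutral element 1_P; multiplication distributes over addition; and 0_P × p = 0_P for every profile p. -/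
/-- A profile: a finitely supported sequence of naturals whose nonzero values
form an initial segment of `ℕ`. -/
def IsProfile (p : ℕ → ℕ) : Prop :=
  (∃ N, ∀ i, N ≤ i → p i = 0) ∧ (∀ i, p i = 0 → p (i + 1) = 0)

/-- Pointwise sum of profiles. -/
def padd (p q : ℕ → ℕ) : ℕ → ℕ := fun i => p i + q i

/-- The zero profile `0_P`. -/
def pzero : ℕ → ℕ := fun _ => 0

/-- The unit profile `1_P`. -/
def pone : ℕ → ℕ := fun i => if i = 0 then 1 else 0

/-- Subtraction-free formula for the product. -/
lemma pmul_eq (p q : ℕ → ℕ) (i : ℕ) :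
    pmul p q i = p i * (∑ j ∈ Finset.range i, q j) + q i * (∑ j ∈ Finset.range (i+1), p j) := by
  unfold pmul
  rw [Finset.sum_range_succ q, Nat.mul_add, Nat.add_right_comm, Nat.add_sub_cancel]

/-- Partial sums of a product are products of partial sums (telescoping). -/
lemma sum_pmul (p q : ℕ → ℕ) (n : ℕ) :
    ∑ j ∈ Finset.range n, pmul p q j
      = (∑ j ∈ Finset.range n, p j) * (∑ j ∈ Finset.range n, q j) := by
  induction n with
  | zero => simp
  | succ n ih =>
    rw [Finset.sum_range_succ (pmul p q), ih, pmul_eq,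
      Finset.sum_range_succ p, Finset.sum_range_succ q]
    ring

lemma sum_pone (n : ℕ) : ∑ j ∈ Finset.range (n + 1), pone j = 1 := by
  simp [pone]

lemma pmul_comm' (p q : ℕ → ℕ) : pmul p q = pmul q p := by
  funext i
  rw [pmul_eq, pmul_eq, Finset.sum_range_succ p, Finset.sum_range_succ q]
  ring

lemma pmul_one' (p : ℕ → ℕ) : pmul p pone = p := by
  funext i
  rcases i with _ | i
  · rw [pmul_eq]; simp [pone]
  · rw [pmul_eq, sum_pone]; simp [pone]

lemma isProfile_pmul (p q : ℕ → ℕ) (hp : IsProfile p) (hq : IsProfile q) :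
    IsProfile (pmul p q) := by
  obtain ⟨⟨Np, hNp⟩, hp2⟩ := hp
  obtain ⟨⟨Nq, hNq⟩, hq2⟩ := hq
  constructor
  · refine ⟨Np + Nq, fun i hi => ?_⟩
    rw [pmul_eq, hNp i (by omega), hNq i (by omega)]
    simp
  · intro i h
    rw [pmul_eq] at h
    have h1 : p i * (∑ j ∈ Finset.range i, q j) = 0 := by omega
    have h2 : q i * (∑ j ∈ Finset.range (i+1), p j) = 0 := by omega
    rw [pmul_eq]
    have t1 : p (i+1) * (∑ j ∈ Finset.range (i+1), q j) = 0 := by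
      rcases Nat.eq_zero_or_pos (p i) with hpi | hpi
      · rw [hp2 i hpi]; ring
      · have hQ : (∑ j ∈ Finset.range i, q j) = 0 := by
          rcases Nat.mul_eq_zero.mp h1 with h | h
          · omega
          · exact h
        have hP : 0 < ∑ j ∈ Finset.range (i+1), p j :=
          lt_of_lt_of_le hpi (Finset.single_le_sum (fun j _ => Nat.zero_le _)
            (Finset.self_mem_range_succ i))
        have hqi : q i = 0 := by
          rcases Nat.mul_eq_zero.mp h2 with h | h
          · exact h
          · omega
        rw [Finset.sum_range_succ, hQ, hqi]; ring
    have t2 : q (i+1) * (∑ j ∈ Finset.range (i+1+1), p j) = 0 := by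
      rcases Nat.eq_zero_or_pos (q i) with hqi | hqi
      · rw [hq2 i hqi]; ring
      · have hP : (∑ j ∈ Finset.range (i+1), p j) = 0 := by
          rcases Nat.mul_eq_zero.mp h2 with h | h
          · omega
          · exact h
        have hpi : p i = 0 := by
          have := Finset.single_le_sum (f := p) (fun j _ => Nat.zero_le _)
            (Finset.self_mem_range_succ i)
          omega
        have : (∑ j ∈ Finset.range (i+1+1), p j) = 0 := by
          rw [Finset.sum_range_succ, hP, hp2 i hpi]
        rw [this]; ring
    omega

/-- The set of profiles is a commutative semiring under profile addition and
profile multiplication. -/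
theorem profiles_commSemiring :
    -- closure under sum and product
    (∀ p q, IsProfile p → IsProfile q → IsProfile (padd p q)) ∧
    (∀ p q, IsProfile p → IsProfile q → IsProfile (pmul p q)) ∧
    IsProfile pzero ∧ IsProfile pone ∧
    -- `(P, +, 0_P)` is a commutative monoid
    (∀ p q r, IsProfile p → IsProfile q → IsProfile r →
      padd (padd p q) r = padd p (padd q r)) ∧
    (∀ p q, IsProfile p → IsProfile q → padd p q = padd q p) ∧
    (∀ p, IsProfile p → padd pzero p = p) ∧
    (∀ p, IsProfile p → padd p pzero = p) ∧
    -- `(P, ×, 1_P)` is a commutative monoid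
    (∀ p q r, IsProfile p → IsProfile q → IsProfile r →
      pmul (pmul p q) r = pmul p (pmul q r)) ∧
    (∀ p q, IsProfile p → IsProfile q → pmul p q = pmul q p) ∧
    (∀ p, IsProfile p → pmul pone p = p) ∧
    (∀ p, IsProfile p → pmul p pone = p) ∧
    -- multiplication distributes over addition
    (∀ p q r, IsProfile p → IsProfile q → IsProfile r →
      pmul p (padd q r) = padd (pmul p q) (pmul p r)) ∧
    (∀ p q r, IsProfile p → IsProfile q → IsProfile r →
      pmul (padd p q) r = padd (pmul p r) (pmul q r)) ∧
    -- `0_P` is absorbing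
    (∀ p, IsProfile p → pmul pzero p = pzero) ∧
    (∀ p, IsProfile p → pmul p pzero = pzero) := by
  refine ⟨?_, isProfile_pmul, ?_, ?_, ?_, ?_, ?_, ?_, ?_, ?_, ?_, ?_, ?_, ?_, ?_, ?_⟩
  · rintro p q ⟨⟨Np, hNp⟩, hp2⟩ ⟨⟨Nq, hNq⟩, hq2⟩
    refine ⟨⟨Np + Nq, fun i hi => ?_⟩, fun i h => ?_⟩
    · simp only [padd, hNp i (by omega), hNq i (by omega)]
    · simp only [padd] at h ⊢
      rw [hp2 i (by omega), hq2 i (by omega)]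
  · exact ⟨⟨0, fun _ _ => rfl⟩, fun _ _ => rfl⟩
  · refine ⟨⟨1, fun i hi => ?_⟩, fun i h => ?_⟩ <;> simp [pone] <;> omega
  · intros; funext i; simp [padd]; ring
  · intros; funext i; simp [padd]; ring
  · intros; funext i; simp [padd, pzero]
  · intros; funext i; simp [padd, pzero]
  · intro p q r _ _ _
    funext i
    rw [pmul_eq, pmul_eq, pmul_eq, pmul_eq, sum_pmul, sum_pmul]
    ring
  · intro p q _ _; exact pmul_comm' p q
  · intro p _; rw [pmul_comm']; exact pmul_one' p
  · intro p _; exact pmul_one' p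
  · intro p q r _ _ _
    funext i
    simp only [pmul_eq, padd, Finset.sum_add_distrib]
    ring
  · intro p q r _ _ _
    funext i
    simp only [pmul_eq, padd, Finset.sum_add_distrib]
    ring
  · intro p _; funext i; simp [pmul_eq, pzero]
  · intro p _; funext i; simp [pmul_eq, pzero]
end

section
/- The profile map is surjective: for every profile p (i.e., every finitely supported function p : ℕ → ℕ such that p(i) = 0 implies p(i+1) = 0) there exists a finite dynamical system (A, f) whose profile is p, i.e., for every i ∈ ℕ the number of states of (A, f) of height i equals p(i). -/
section Aux

variable (p : ℕ → ℕ) (N : ℕ)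

abbrev Sys : Type := Σ i : Fin N, Fin (p i)

variable {p N} (hp : ∀ i, p i = 0 → p (i + 1) = 0)

def sysF : Sys p N → Sys p N := fun x =>
  match x with
  | ⟨⟨0, h0⟩, j⟩ => ⟨⟨0, h0⟩, j⟩
  | ⟨⟨i+1, h⟩, j⟩ =>
      ⟨⟨i, Nat.lt_of_succ_lt h⟩,
        ⟨0, Nat.pos_of_ne_zero fun hz => Nat.pos_iff_ne_zero.mp j.pos (hp i hz)⟩⟩

lemma sysF_fixed (x : Sys p N) (hx : (x.1 : ℕ) = 0) : sysF hp x = x := by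
  obtain ⟨⟨i, hi⟩, j⟩ := x
  simp only at hx
  subst hx
  rfl

lemma sysF_level (x : Sys p N) : ((sysF hp x).1 : ℕ) = (x.1 : ℕ) - 1 := by
  obtain ⟨⟨i, hi⟩, j⟩ := x
  match i with
  | 0 => rfl
  | i + 1 => rfl

lemma sysF_iter_level (k : ℕ) (x : Sys p N) :
    (((sysF hp)^[k] x).1 : ℕ) = (x.1 : ℕ) - k := by
  induction k generalizing x with
  | zero => simp
  | succ k ih =>
      rw [Function.iterate_succ_apply, ih, sysF_level]
      omega

lemma periodic_iff (x : Sys p N) : IsPeriodicState (sysF hp) x ↔ (x.1 : ℕ) = 0 := by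
  constructor
  · rintro ⟨k, hk, hfix⟩
    have := sysF_iter_level hp k x
    rw [hfix] at this
    omega
  · intro hx
    exact ⟨1, le_refl _, by simpa using sysF_fixed hp x hx⟩

lemma height_eq (x : Sys p N) : height (sysF hp) x = (x.1 : ℕ) := by
  have hset : {h : ℕ | IsPeriodicState (sysF hp) ((sysF hp)^[h] x)} = Set.Ici (x.1 : ℕ) := by
    ext h
    simp only [Set.mem_setOf_eq, periodic_iff hp, sysF_iter_level hp, Set.mem_Ici]
    omega
  rw [height, hset, csInf_Ici]

def fiberEquiv (k : Fin N) : {x : Sys p N // x.1 = k} ≃ Fin (p k) where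
  toFun x := x.2 ▸ x.1.2
  invFun j := ⟨⟨k, j⟩, rfl⟩
  left_inv := by rintro ⟨⟨i, j⟩, rfl⟩; rfl
  right_inv := by intro j; rfl

end Aux

/-- The profile map is surjective: every profile is the profile of some finite
dynamical system. -/
theorem profile_surjective (p : ℕ → ℕ) (hp : IsProfile p) :
    ∃ (A : Type) (_ : Fintype A) (f : A → A), ∀ i, heightCount f i = p i := by
  obtain ⟨⟨N, hN⟩, hmono⟩ := hp
  refine ⟨Sys p N, inferInstance, sysF hmono, fun i => ?_⟩
  rw [heightCount]
  by_cases hi : i < N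
  · have e1 : {x : Sys p N // height (sysF hmono) x = i} ≃ {x : Sys p N // x.1 = ⟨i, hi⟩} := by
      apply Equiv.subtypeEquivRight
      intro x
      rw [height_eq]
      constructor
      · intro h; exact Fin.ext h
      · intro h; rw [h]
    rw [Nat.card_congr (e1.trans (fiberEquiv ⟨i, hi⟩))]
    simp
  · have : IsEmpty {x : Sys p N // height (sysF hmono) x = i} := by
      constructor
      rintro ⟨x, hx⟩
      rw [height_eq] at hx
      exact hi (hx ▸ x.1.2)
    rw [Nat.card_of_isEmpty, hN i (not_lt.mp hi)]
end

section
/- The size function |·| : P → ℕ, defined by |p| = ∑_{i} p(i), is a semiring homomorphism: |0_P| = 0, |1_P| = 1, |p + q| = |p| + |q|, and |p × q| = |p| · |q| for all profiles p, q. -/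
/-- The size of a profile: the (finite) sum of its values. -/
noncomputable def psize (p : ℕ → ℕ) : ℕ := ∑ᶠ i, p i

lemma psize_eq_range {p : ℕ → ℕ} {N : ℕ} (h : ∀ i, N ≤ i → p i = 0) :
    psize p = ∑ i ∈ Finset.range N, p i := by
  apply finsum_eq_sum_of_support_subset
  intro i hi
  simp only [Function.mem_support] at hi
  simp only [Finset.coe_range, Set.mem_Iio]
  by_contra hc
  exact hi (h i (le_of_not_gt hc))

lemma pmul_range (p q : ℕ → ℕ) (N : ℕ) :
    ∑ i ∈ Finset.range N, pmul p q i =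
      (∑ i ∈ Finset.range N, p i) * (∑ i ∈ Finset.range N, q i) := by
  induction N with
  | zero => simp
  | succ n ih =>
    rw [Finset.sum_range_succ, ih, Finset.sum_range_succ p, Finset.sum_range_succ q]
    unfold pmul
    set a := ∑ i ∈ Finset.range n, p i
    set b := ∑ i ∈ Finset.range n, q i
    rw [Finset.sum_range_succ q, Finset.sum_range_succ p]
    set x := p n
    set y := q n
    have h1 : x * (b + y) + y * (a + x) = (x * b + y * a + x * y) + x * y := by ring
    rw [h1, Nat.add_sub_cancel]
    ring

/-- The size function is a semiring homomorphism from the profiles to `ℕ`. -/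
theorem psize_semiring_hom :
    psize pzero = 0 ∧
    psize pone = 1 ∧
    (∀ p q, IsProfile p → IsProfile q → psize (padd p q) = psize p + psize q) ∧
    (∀ p q, IsProfile p → IsProfile q → psize (pmul p q) = psize p * psize q) := by
  refine ⟨?_, ?_, ?_, ?_⟩
  · simp [psize, pzero]
  · rw [psize_eq_range (N := 1) (by intro i hi; simp [pone]; omega)]
    simp [pone]
  · rintro p q ⟨⟨N, hN⟩, -⟩ ⟨⟨M, hM⟩, -⟩
    have hp : ∀ i, max N M ≤ i → p i = 0 := fun i hi => hN i (le_trans (le_max_left _ _) hi)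
    have hq : ∀ i, max N M ≤ i → q i = 0 := fun i hi => hM i (le_trans (le_max_right _ _) hi)
    have hpq : ∀ i, max N M ≤ i → padd p q i = 0 := fun i hi => by
      simp [padd, hp i hi, hq i hi]
    rw [psize_eq_range hpq, psize_eq_range hp, psize_eq_range hq, ← Finset.sum_add_distrib]
    rfl
  · rintro p q ⟨⟨N, hN⟩, -⟩ ⟨⟨M, hM⟩, -⟩
    have hp : ∀ i, max N M ≤ i → p i = 0 := fun i hi => hN i (le_trans (le_max_left _ _) hi)
    have hq : ∀ i, max N M ≤ i → q i = 0 := fun i hi => hM i (le_trans (le_max_right _ _) hi)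
    have hpq : ∀ i, max N M ≤ i → pmul p q i = 0 := fun i hi => by
      simp [pmul, hp i hi, hq i hi]
    rw [psize_eq_range hpq, psize_eq_range hp, psize_eq_range hq, pmul_range]
end

section
/- Let G = {p ∈ P : p(0) = 1}. If a profile p ∈ G is written as a finite ℕ-linear combination p = ∑_{i=1}^{m} a_i • q_i with a_i ∈ ℕ and q_i ∈ P, then there exists an index i such that a_i = 1, q_i = p, and a_j • q_j = 0_P for all j ≠ i. Consequently, every subset S ⊆ P such that every profile is a finite ℕ-linear combination of elements of S must contain G; that is, G is the unique minimal generating set of P as an ℕ-semimodule. -/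
/-- Scalar multiple of a profile: `(n • p)(i) = n · p(i)`. -/
def psmul (n : ℕ) (p : ℕ → ℕ) : ℕ → ℕ := fun i => n * p i

/-!
Evaluating `p = ∑ aᵢ • qᵢ` at `0` gives `1 = ∑ aᵢ qᵢ(0)` in `ℕ`, so exactly one term `aᵢ qᵢ(0)`
equals `1` and the others vanish. A profile vanishing at `0` vanishes everywhere, so every other
term `aⱼ • qⱼ` is null, and then `p = 1 • qᵢ = qᵢ`. In particular, a generating set must contain
each profile starting with `1`.
-/

theorem Finset.exists_eq_one_of_sum_eq_one {ι : Type*} {s : Finset ι} {f : ι → ℕ}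
    (h : ∑ i ∈ s, f i = 1) : ∃ i ∈ s, f i = 1 ∧ ∀ j ∈ s, j ≠ i → f j = 0 := by
  classical
  obtain ⟨i, hi, hfi⟩ := Finset.exists_ne_zero_of_sum_ne_zero (h ▸ one_ne_zero)
  have hsplit := Finset.add_sum_erase s f hi
  have hrest : ∑ j ∈ s.erase i, f j = 0 := by omega
  refine ⟨i, hi, by omega, fun j hj hji => ?_⟩
  exact Finset.sum_eq_zero_iff.1 hrest j (Finset.mem_erase.2 ⟨hji, hj⟩)

theorem IsProfile.eq_zero_of_apply_zero {q : ℕ → ℕ} (hq : IsProfile q) (h0 : q 0 = 0) (k : ℕ) :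
    q k = 0 := by
  induction k with
  | zero => exact h0
  | succ k ih => exact hq.2 k ih

theorem IsProfile.psmul_eq_pzero {q : ℕ → ℕ} (hq : IsProfile q) {a : ℕ} (h0 : a * q 0 = 0) :
    psmul a q = pzero := by
  funext k
  rcases Nat.mul_eq_zero.1 h0 with ha | hq0
  · simp [psmul, pzero, ha]
  · simp [psmul, pzero, hq.eq_zero_of_apply_zero hq0 k]

theorem exists_eq_summand_of_apply_zero_eq_one {p : ℕ → ℕ} (hp0 : p 0 = 1) {m : ℕ}
    {a : Fin m → ℕ} {q : Fin m → ℕ → ℕ} (hq : ∀ i, IsProfile (q i))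
    (hsum : p = fun k => ∑ i, a i * q i k) :
    ∃ i, a i = 1 ∧ q i = p ∧ ∀ j, j ≠ i → psmul (a j) (q j) = pzero := by
  obtain ⟨i, -, hi, hrest⟩ := Finset.exists_eq_one_of_sum_eq_one (hp0 ▸ (congrFun hsum 0).symm)
  have hnull : ∀ j, j ≠ i → psmul (a j) (q j) = pzero :=
    fun j hj => (hq j).psmul_eq_pzero (hrest j (Finset.mem_univ j) hj)
  have hai : a i = 1 := Nat.eq_one_of_mul_eq_one_right hi
  refine ⟨i, hai, funext fun k => ?_, hnull⟩
  calc q i k = a i * q i k := by rw [hai, one_mul]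
    _ = ∑ j, a j * q j k := (Finset.sum_eq_single_of_mem i (Finset.mem_univ i)
          fun j _ hj => congrFun (hnull j hj) k).symm
    _ = p k := by rw [hsum]

/-- Any `ℕ`-linear combination of profiles equal to a profile `p` with
`p 0 = 1` must contain `p` itself with coefficient `1`, all its other terms
being null; consequently any generating set `S` of the profiles as an
`ℕ`-semimodule must contain every profile starting with `1`, i.e.
`G = {p ∈ P : p 0 = 1}` is the unique minimal generating set. -/
theorem unique_minimal_generating_set :
    (∀ p : ℕ → ℕ, IsProfile p → p 0 = 1 →
      ∀ (m : ℕ) (a : Fin m → ℕ) (q : Fin m → (ℕ → ℕ)),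
        (∀ i, IsProfile (q i)) →
        p = (fun k => ∑ i : Fin m, a i * q i k) →
        ∃ i : Fin m, a i = 1 ∧ q i = p ∧ ∀ j : Fin m, j ≠ i → psmul (a j) (q j) = pzero) ∧
    (∀ S : Set (ℕ → ℕ), (∀ s ∈ S, IsProfile s) →
      (∀ p : ℕ → ℕ, IsProfile p →
        ∃ (m : ℕ) (a : Fin m → ℕ) (q : Fin m → (ℕ → ℕ)),
          (∀ i, q i ∈ S) ∧ p = (fun k => ∑ i : Fin m, a i * q i k)) →
      ∀ g : ℕ → ℕ, IsProfile g → g 0 = 1 → g ∈ S) := by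
  refine ⟨fun p _ hp0 m a q hq hsum => exists_eq_summand_of_apply_zero_eq_one hp0 hq hsum, ?_⟩
  intro S hS hgen g hg hg0
  obtain ⟨m, a, q, hqS, hsum⟩ := hgen g hg
  obtain ⟨i, -, hqi, -⟩ := exists_eq_summand_of_apply_zero_eq_one hg0 (fun i => hS _ (hqS i)) hsum
  exact hqi ▸ hqS i
end

section
/- P is not a unique factorisation semiring: writing (x_0, …, x_h) for the profile with the indicated initial values and 0 afterwards, the profile (2,4) satisfies (2,4) = (2) × (1,2) = (1,1) × (2,1); each of the four profiles (2), (1,2), (1,1), (2,1) is irreducible (whenever it equals a product q × r of profiles, q = 1_P or r = 1_P); and the multiset of factors {(2), (1,2)} is different from {(1,1), (2,1)}. -/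
/-- A profile is irreducible if its only factorisations are trivial. -/
def PIrreducible (p : ℕ → ℕ) : Prop :=
  ∀ q r : ℕ → ℕ, IsProfile q → IsProfile r → p = pmul q r → q = pone ∨ r = pone

/-- The profile `(2)`. -/
def prof2 : ℕ → ℕ := fun i => if i = 0 then 2 else 0

/-- The profile `(1, 2)`. -/
def prof12 : ℕ → ℕ := fun i => if i = 0 then 1 else if i = 1 then 2 else 0

/-- The profile `(1, 1)`. -/
def prof11 : ℕ → ℕ := fun i => if i = 0 then 1 else if i = 1 then 1 else 0

/-- The profile `(2, 1)`. -/
def prof21 : ℕ → ℕ := fun i => if i = 0 then 2 else if i = 1 then 1 else 0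

/-- The profile `(2, 4)`. -/
def prof24 : ℕ → ℕ := fun i => if i = 0 then 2 else if i = 1 then 4 else 0

lemma pmul_zero (q r : ℕ → ℕ) : pmul q r 0 = q 0 * r 0 := by
  simp [pmul, Finset.sum_range_one, Nat.mul_comm (r 0) (q 0)]

lemma pmul_one (q r : ℕ → ℕ) :
    pmul q r 1 = q 1 * r 0 + r 1 * q 0 + q 1 * r 1 := by
  show q 1 * (∑ j ∈ Finset.range 2, r j) + r 1 * (∑ j ∈ Finset.range 2, q j) - q 1 * r 1 = _
  rw [Finset.sum_range_succ, Finset.sum_range_one, Finset.sum_range_succ, Finset.sum_range_one]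
  have : q 1 * (r 0 + r 1) + r 1 * (q 0 + q 1)
      = (q 1 * r 0 + r 1 * q 0 + q 1 * r 1) + q 1 * r 1 := by ring
  rw [this, Nat.add_sub_cancel]

lemma sum_bound (f : ℕ → ℕ) (i : ℕ) (hi : 1 ≤ i) :
    f 0 + f i ≤ ∑ j ∈ Finset.range (i + 1), f j := by
  have hsub : ({0, i} : Finset ℕ) ⊆ Finset.range (i + 1) := by
    intro x hx; simp at hx; rcases hx with h | h <;> simp [h]
  calc f 0 + f i = ∑ j ∈ ({0, i} : Finset ℕ), f j := (Finset.sum_pair (by omega)).symm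
    _ ≤ _ := Finset.sum_le_sum_of_subset hsub

lemma vanish (q r : ℕ → ℕ) (hq0 : 1 ≤ q 0) (hr0 : 1 ≤ r 0) (i : ℕ) (hi : 2 ≤ i)
    (h : pmul q r i = 0) : q i = 0 ∧ r i = 0 := by
  unfold pmul at h
  have hle : q i * (∑ j ∈ Finset.range (i + 1), r j)
      + r i * (∑ j ∈ Finset.range (i + 1), q j) ≤ q i * r i :=
    Nat.le_of_sub_eq_zero h
  have hSr := sum_bound r i (by omega)
  have hSq := sum_bound q i (by omega)
  have h1 : q i * (r 0 + r i) ≤ q i * (∑ j ∈ Finset.range (i + 1), r j) :=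
    Nat.mul_le_mul_left _ hSr
  have h2 : r i * (q 0 + q i) ≤ r i * (∑ j ∈ Finset.range (i + 1), q j) :=
    Nat.mul_le_mul_left _ hSq
  constructor
  · by_contra hne
    have : 1 ≤ q i := Nat.one_le_iff_ne_zero.mpr hne
    nlinarith
  · by_contra hne
    have : 1 ≤ r i := Nat.one_le_iff_ne_zero.mpr hne
    nlinarith

lemma eq_pone (q : ℕ → ℕ) (h0 : q 0 = 1) (h1 : q 1 = 0)
    (h2 : ∀ i, 2 ≤ i → q i = 0) : q = pone := by
  funext i
  match i with
  | 0 => simpa [pone]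
  | 1 => simpa [pone]
  | (i+2) => simpa [pone] using h2 (i+2) (by omega)

lemma extract (p q r : ℕ → ℕ) (h : p = pmul q r) (hp0 : p 0 ≠ 0)
    (hp2 : ∀ i, 2 ≤ i → p i = 0) :
    1 ≤ q 0 ∧ 1 ≤ r 0 ∧ q 0 * r 0 = p 0 ∧ q 1 * r 0 + r 1 * q 0 + q 1 * r 1 = p 1 ∧
      (∀ i, 2 ≤ i → q i = 0 ∧ r i = 0) := by
  have h0 : q 0 * r 0 = p 0 := by rw [h, pmul_zero]
  have hq0 : 1 ≤ q 0 := by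
    rcases Nat.eq_zero_or_pos (q 0) with hz | hz
    · rw [hz] at h0; simp at h0; exact absurd h0.symm hp0
    · exact hz
  have hr0 : 1 ≤ r 0 := by
    rcases Nat.eq_zero_or_pos (r 0) with hz | hz
    · rw [hz] at h0; simp at h0; exact absurd h0.symm hp0
    · exact hz
  refine ⟨hq0, hr0, h0, by rw [h, pmul_one], fun i hi => vanish q r hq0 hr0 i hi ?_⟩
  rw [← h]; exact hp2 i hi

lemma prod_eq (p q : ℕ → ℕ)
    (h0 : pmul p q 0 = prof24 0) (h1 : pmul p q 1 = prof24 1)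
    (h2 : ∀ i, pmul p q (i + 2) = 0) : pmul p q = prof24 := by
  funext i
  match i with
  | 0 => exact h0
  | 1 => exact h1
  | (i+2) => rw [h2 i]; simp [prof24]


lemma two_ne (i : ℕ) (hi : 2 ≤ i) : i ≠ 0 ∧ i ≠ 1 := ⟨by omega, by omega⟩

/-- The profiles are not a unique factorisation semiring:
`(2,4) = (2) × (1,2) = (1,1) × (2,1)` are two genuinely different
factorisations into irreducibles. -/
theorem not_unique_factorisation :
    pmul prof2 prof12 = prof24 ∧
    pmul prof11 prof21 = prof24 ∧
    PIrreducible prof2 ∧ PIrreducible prof12 ∧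
    PIrreducible prof11 ∧ PIrreducible prof21 ∧
    ({prof2, prof12} : Multiset (ℕ → ℕ)) ≠ ({prof11, prof21} : Multiset (ℕ → ℕ)) := by
  refine ⟨?_, ?_, ?_, ?_, ?_, ?_, ?_⟩
  · refine prod_eq _ _ ?_ ?_ ?_
    · rw [pmul_zero]; simp [prof2, prof12, prof24]
    · rw [pmul_one]; simp [prof2, prof12, prof24]
    · intro i; simp [pmul, prof2, prof12]
  · refine prod_eq _ _ ?_ ?_ ?_
    · rw [pmul_zero]; simp [prof11, prof21, prof24]
    · rw [pmul_one]; simp [prof11, prof21, prof24]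
    · intro i; simp [pmul, prof11, prof21]
  · -- prof2 irreducible
    intro q r _ _ h
    obtain ⟨hq0, hr0, h0, h1, h2⟩ := extract prof2 q r h (by simp [prof2])
      (fun i hi => by simp [prof2, (two_ne i hi).1])
    have h0' : q 0 * r 0 = 2 := by simpa [prof2] using h0
    have h1' : q 1 * r 0 + r 1 * q 0 + q 1 * r 1 = 0 := by simpa [prof2] using h1
    have hc : q 1 = 0 := by
      rcases Nat.mul_eq_zero.mp (by omega : q 1 * r 0 = 0) with h' | h' <;> omega
    have hd : r 1 = 0 := by
      rcases Nat.mul_eq_zero.mp (by omega : r 1 * q 0 = 0) with h' | h' <;> omega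
    have hqle : q 0 ≤ 2 := Nat.le_of_dvd (by norm_num) ⟨r 0, h0'.symm⟩
    have : q 0 = 1 ∨ q 0 = 2 := by omega
    rcases this with ha | ha
    · left; exact eq_pone q ha hc (fun i hi => (h2 i hi).1)
    · right
      rw [ha] at h0'
      exact eq_pone r (by omega) hd (fun i hi => (h2 i hi).2)
  · -- prof12 irreducible
    intro q r _ _ h
    obtain ⟨hq0, hr0, h0, h1, h2⟩ := extract prof12 q r h (by simp [prof12])
      (fun i hi => by simp [prof12, (two_ne i hi).1, (two_ne i hi).2])
    have h0' : q 0 * r 0 = 1 := by simpa [prof12] using h0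
    have ha : q 0 = 1 := by nlinarith
    have hb : r 0 = 1 := by nlinarith
    have h1' : q 1 + r 1 + q 1 * r 1 = 2 := by
      have := h1; rw [ha, hb] at this; simpa [prof12] using this
    have : q 1 = 0 ∨ r 1 = 0 := by
      by_contra hcon
      push_neg at hcon
      have hc1 : 1 ≤ q 1 := Nat.one_le_iff_ne_zero.mpr hcon.1
      have hd1 : 1 ≤ r 1 := Nat.one_le_iff_ne_zero.mpr hcon.2
      nlinarith
    rcases this with hc | hd
    · left; exact eq_pone q ha hc (fun i hi => (h2 i hi).1)
    · right; exact eq_pone r hb hd (fun i hi => (h2 i hi).2)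
  · -- prof11 irreducible
    intro q r _ _ h
    obtain ⟨hq0, hr0, h0, h1, h2⟩ := extract prof11 q r h (by simp [prof11])
      (fun i hi => by simp [prof11, (two_ne i hi).1, (two_ne i hi).2])
    have h0' : q 0 * r 0 = 1 := by simpa [prof11] using h0
    have ha : q 0 = 1 := by nlinarith
    have hb : r 0 = 1 := by nlinarith
    have h1' : q 1 + r 1 + q 1 * r 1 = 1 := by
      have := h1; rw [ha, hb] at this; simpa [prof11] using this
    have : q 1 = 0 ∨ r 1 = 0 := by
      by_contra hcon
      push_neg at hcon
      have hc1 : 1 ≤ q 1 := Nat.one_le_iff_ne_zero.mpr hcon.1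
      have hd1 : 1 ≤ r 1 := Nat.one_le_iff_ne_zero.mpr hcon.2
      nlinarith
    rcases this with hc | hd
    · left; exact eq_pone q ha hc (fun i hi => (h2 i hi).1)
    · right; exact eq_pone r hb hd (fun i hi => (h2 i hi).2)
  · -- prof21 irreducible
    intro q r _ _ h
    obtain ⟨hq0, hr0, h0, h1, h2⟩ := extract prof21 q r h (by simp [prof21])
      (fun i hi => by simp [prof21, (two_ne i hi).1, (two_ne i hi).2])
    have h0' : q 0 * r 0 = 2 := by simpa [prof21] using h0
    have h1' : q 1 * r 0 + r 1 * q 0 + q 1 * r 1 = 1 := by simpa [prof21] using h1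
    have hqle : q 0 ≤ 2 := Nat.le_of_dvd (by norm_num) ⟨r 0, h0'.symm⟩
    have : q 0 = 1 ∨ q 0 = 2 := by omega
    rcases this with ha | ha
    · -- q 0 = 1, r 0 = 2
      have hb : r 0 = 2 := by rw [ha] at h0'; omega
      rw [ha, hb] at h1'
      have hc : q 1 = 0 := by omega
      left; exact eq_pone q ha hc (fun i hi => (h2 i hi).1)
    · -- q 0 = 2, r 0 = 1
      have hb : r 0 = 1 := by rw [ha] at h0'; omega
      rw [ha, hb] at h1'
      have hd : r 1 = 0 := by omega
      right; exact eq_pone r hb hd (fun i hi => (h2 i hi).2)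
  · intro h
    have hmem : prof2 ∈ ({prof11, prof21} : Multiset (ℕ → ℕ)) := by
      rw [← h]; simp
    simp only [Multiset.insert_eq_cons, Multiset.mem_cons, Multiset.mem_singleton] at hmem
    rcases hmem with h' | h' <;>
      exact absurd (congrFun h' 1) (by simp [prof2, prof11, prof21])
end

section
/- Let σ be a type of variables and let p, q be multivariate polynomials with natural number coefficients in variables σ. Then the equation p = q has a solution in the semiring P of profiles (i.e., there exists r : σ → P with eval r (φ∗ p) = eval r (φ∗ q), where φ∗ denotes coefficientwise application of the embedding φ : ℕ → P) if and only if it has a solution in ℕ (i.e., there exists s : σ → ℕ with eval s p = eval s q). -/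
open Finset

/-- A profile: a finitely supported sequence of naturals whose nonzero values
form an initial segment of `ℕ`. -/
structure Profile where
  toFun : ℕ → ℕ
  exists_bound : ∃ N, ∀ i, N ≤ i → toFun i = 0
  zero_succ : ∀ i, toFun i = 0 → toFun (i + 1) = 0

namespace Profile

theorem ext' {p q : Profile} (h : ∀ i, p.toFun i = q.toFun i) : p = q := by
  cases p; cases q
  simp only [mk.injEq]
  funext i; exact h i

theorem zero_mono (p : Profile) : ∀ {i j : ℕ}, i ≤ j → p.toFun i = 0 → p.toFun j = 0 := by
  intro i j hij h
  induction j, hij using Nat.le_induction with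
  | base => exact h
  | succ k _ ih => exact p.zero_succ k ih

/-- The underlying function of the sum of profiles: the pointwise sum. -/
def addFun (p q : ℕ → ℕ) : ℕ → ℕ := fun i => p i + q i

/-- The underlying function of the product of profiles:
`(p × q)(i) = p(i)·∑_{j≤i} q(j) + q(i)·∑_{j≤i} p(j) − p(i)·q(i)`. -/
def mulFun (p q : ℕ → ℕ) : ℕ → ℕ := fun i =>
  p i * (∑ j ∈ range (i + 1), q j) + q i * (∑ j ∈ range (i + 1), p j) - p i * q i

theorem mulFun_eq (p q : ℕ → ℕ) (i : ℕ) :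
    mulFun p q i = p i * (∑ j ∈ range i, q j) + q i * (∑ j ∈ range (i + 1), p j) := by
  unfold mulFun
  rw [sum_range_succ q i, Nat.mul_add]
  generalize p i * ∑ j ∈ range i, q j = A
  generalize p i * q i = B
  generalize q i * ∑ j ∈ range (i + 1), p j = C
  omega

theorem sum_mulFun (p q : ℕ → ℕ) (n : ℕ) :
    ∑ j ∈ range n, mulFun p q j = (∑ j ∈ range n, p j) * (∑ j ∈ range n, q j) := by
  induction n with
  | zero => simp
  | succ n ih =>
    rw [sum_range_succ, ih, mulFun_eq, sum_range_succ p n, sum_range_succ q n]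
    ring

theorem mulFun_comm (p q : ℕ → ℕ) : mulFun p q = mulFun q p := by
  funext i
  unfold mulFun
  rw [Nat.mul_comm (p i) (q i)]
  generalize p i * ∑ j ∈ range (i + 1), q j = A
  generalize q i * ∑ j ∈ range (i + 1), p j = B
  generalize q i * p i = C
  omega

theorem mulFun_assoc (p q r : ℕ → ℕ) :
    mulFun (mulFun p q) r = mulFun p (mulFun q r) := by
  funext i
  rw [mulFun_eq (mulFun p q) r, mulFun_eq p (mulFun q r), mulFun_eq p q, mulFun_eq q r,
    sum_mulFun, sum_mulFun]
  ring

theorem mulFun_addFun (p q r : ℕ → ℕ) :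
    mulFun p (addFun q r) = addFun (mulFun p q) (mulFun p r) := by
  funext i
  simp only [mulFun_eq, addFun, Finset.sum_add_distrib]
  ring

theorem addFun_mulFun (p q r : ℕ → ℕ) :
    mulFun (addFun p q) r = addFun (mulFun p r) (mulFun q r) := by
  rw [mulFun_comm, mulFun_addFun, mulFun_comm r p, mulFun_comm r q]

/-- The underlying function of the unit profile `1_P`. -/
def oneFun : ℕ → ℕ := fun i => if i = 0 then 1 else 0

theorem sum_oneFun (n : ℕ) : ∑ j ∈ range (n + 1), oneFun j = 1 := by
  induction n with
  | zero => simp [oneFun]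
  | succ n ih => rw [sum_range_succ, ih]; simp [oneFun]

theorem mulFun_oneFun (p : ℕ → ℕ) : mulFun p oneFun = p := by
  funext i
  match i with
  | 0 => simp [mulFun_eq, oneFun]
  | n + 1 =>
    rw [mulFun_eq, sum_oneFun]
    simp [oneFun]

theorem oneFun_mulFun (p : ℕ → ℕ) : mulFun oneFun p = p := by
  rw [mulFun_comm, mulFun_oneFun]

theorem mulFun_zeroFun (p : ℕ → ℕ) : mulFun p (fun _ => 0) = fun _ => 0 := by
  funext i
  simp [mulFun]

theorem zeroFun_mulFun (p : ℕ → ℕ) : mulFun (fun _ => 0) p = fun _ => 0 := by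
  rw [mulFun_comm, mulFun_zeroFun]

/-- Sum of profiles. -/
def add (p q : Profile) : Profile where
  toFun := addFun p.toFun q.toFun
  exists_bound := by
    obtain ⟨N, hN⟩ := p.exists_bound
    obtain ⟨M, hM⟩ := q.exists_bound
    exact ⟨max N M, fun i hi => by
      simp [addFun, hN i (le_trans (le_max_left _ _) hi),
        hM i (le_trans (le_max_right _ _) hi)]⟩
  zero_succ := by
    intro i h
    simp only [addFun, Nat.add_eq_zero] at h ⊢
    exact ⟨p.zero_succ i h.1, q.zero_succ i h.2⟩

/-- Product of profiles. -/
def mul (p q : Profile) : Profile where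
  toFun := mulFun p.toFun q.toFun
  exists_bound := by
    obtain ⟨N, hN⟩ := p.exists_bound
    obtain ⟨M, hM⟩ := q.exists_bound
    refine ⟨max N M, fun i hi => ?_⟩
    have hp : p.toFun i = 0 := hN i (le_trans (le_max_left _ _) hi)
    have hq : q.toFun i = 0 := hM i (le_trans (le_max_right _ _) hi)
    simp [mulFun, hp, hq]
  zero_succ := by
    intro i h
    rw [mulFun_eq] at h ⊢
    simp only [Nat.add_eq_zero, Nat.mul_eq_zero] at h ⊢
    obtain ⟨h1, h2⟩ := h
    constructor
    · by_contra hc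
      push_neg at hc
      obtain ⟨hp1, hS⟩ := hc
      have hq0 : q.toFun 0 ≠ 0 := by
        intro h0
        exact hS (Finset.sum_eq_zero fun j _ => q.zero_mono (Nat.zero_le j) h0)
      rcases h1 with h1 | h1
      · exact hp1 (p.zero_succ i h1)
      · rcases Nat.eq_zero_or_pos i with rfl | hi
        · rcases h2 with h2 | h2
          · exact hq0 h2
          · have hp0 : p.toFun 0 = 0 :=
              (Finset.sum_eq_zero_iff).mp h2 0 (Finset.mem_range.mpr Nat.one_pos)
            exact hp1 (p.zero_mono (Nat.zero_le 1) hp0)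
        · exact hq0 ((Finset.sum_eq_zero_iff).mp h1 0 (Finset.mem_range.mpr hi))
    · by_contra hc
      push_neg at hc
      obtain ⟨hq1, hT⟩ := hc
      have hp0 : p.toFun 0 ≠ 0 := by
        intro h0
        exact hT (Finset.sum_eq_zero fun j _ => p.zero_mono (Nat.zero_le j) h0)
      rcases h2 with h2 | h2
      · exact hq1 (q.zero_succ i h2)
      · exact hp0 ((Finset.sum_eq_zero_iff).mp h2 0 (Finset.mem_range.mpr i.succ_pos))

instance : Add Profile := ⟨add⟩

instance : Mul Profile := ⟨mul⟩

instance : Zero Profile := ⟨⟨fun _ => 0, ⟨0, fun _ _ => rfl⟩, fun _ _ => rfl⟩⟩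

instance : One Profile :=
  ⟨⟨oneFun, ⟨1, fun i hi => if_neg (by omega)⟩, fun i _ => if_neg (Nat.succ_ne_zero i)⟩⟩

/-- The profiles form a commutative semiring under profile sum and product. -/
instance : CommSemiring Profile where
  add := (· + ·)
  nsmul := nsmulRec
  npow := npowRec
  add_assoc p q r := ext' fun i => Nat.add_assoc _ _ _
  add_comm p q := ext' fun i => Nat.add_comm _ _
  zero := 0
  zero_add p := ext' fun i => Nat.zero_add _
  add_zero p := ext' fun i => Nat.add_zero _
  mul := (· * ·)
  mul_assoc p q r := ext' fun i => congrFun (mulFun_assoc p.toFun q.toFun r.toFun) i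
  mul_comm p q := ext' fun i => congrFun (mulFun_comm p.toFun q.toFun) i
  one := 1
  one_mul p := ext' fun i => congrFun (oneFun_mulFun p.toFun) i
  mul_one p := ext' fun i => congrFun (mulFun_oneFun p.toFun) i
  left_distrib p q r := ext' fun i => congrFun (mulFun_addFun p.toFun q.toFun r.toFun) i
  right_distrib p q r := ext' fun i => congrFun (addFun_mulFun p.toFun q.toFun r.toFun) i
  zero_mul p := ext' fun i => congrFun (zeroFun_mulFun p.toFun) i
  mul_zero p := ext' fun i => congrFun (mulFun_zeroFun p.toFun) i

theorem add_toFun (p q : Profile) : (p + q).toFun = addFun p.toFun q.toFun := rfl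

theorem mul_toFun (p q : Profile) : (p * q).toFun = mulFun p.toFun q.toFun := rfl

theorem zero_toFun : (0 : Profile).toFun = fun _ => 0 := rfl

theorem one_toFun : (1 : Profile).toFun = oneFun := rfl

/-- The profile `(n, 0, 0, …)` of height `0`. -/
def phiProfile (n : ℕ) : Profile where
  toFun := fun i => if i = 0 then n else 0
  exists_bound := ⟨1, fun i hi => if_neg (by omega)⟩
  zero_succ := fun i _ => if_neg (Nat.succ_ne_zero i)

/-- The embedding `φ : ℕ → P` sending `n` to the profile `(n, 0, 0, …)` is a
semiring homomorphism. -/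
def phi : ℕ →+* Profile where
  toFun := phiProfile
  map_one' := ext' fun i => rfl
  map_zero' := ext' fun i => by
    show (if i = 0 then 0 else 0) = 0
    split <;> rfl
  map_add' m n := ext' fun i => by
    show (if i = 0 then m + n else 0) =
      (if i = 0 then m else 0) + (if i = 0 then n else 0)
    by_cases h : i = 0 <;> simp [h]
  map_mul' m n := ext' fun i => by
    show (phiProfile (m * n)).toFun i =
      mulFun (phiProfile m).toFun (phiProfile n).toFun i
    rw [mulFun_eq]
    match i with
    | 0 => simp [phiProfile, Nat.mul_comm]
    | k + 1 => simp [phiProfile]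



theorem sum_stable {f : ℕ → ℕ} {N M : ℕ} (hN : ∀ i, N ≤ i → f i = 0) (h : N ≤ M) :
    ∑ j ∈ range M, f j = ∑ j ∈ range N, f j := by
  symm
  apply Finset.sum_subset (Finset.range_subset_range.mpr h)
  intro x _ hx
  exact hN x (by simpa using hx)

/-- The bound witness for a profile. -/
noncomputable def bnd (p : Profile) : ℕ := Classical.choose p.exists_bound

theorem bnd_spec (p : Profile) : ∀ i, bnd p ≤ i → p.toFun i = 0 :=
  Classical.choose_spec p.exists_bound

/-- The total sum of a profile. -/
noncomputable def psumFun (p : Profile) : ℕ := ∑ j ∈ range (bnd p), p.toFun j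

theorem psumFun_eq (p : Profile) {N : ℕ} (hN : ∀ i, N ≤ i → p.toFun i = 0) :
    psumFun p = ∑ j ∈ range N, p.toFun j := by
  unfold psumFun
  rw [← sum_stable (bnd_spec p) (le_max_left (bnd p) N),
    ← sum_stable hN (le_max_right (bnd p) N)]

/-- The total sum as a semiring homomorphism `Profile →+* ℕ`. -/
noncomputable def psum : Profile →+* ℕ where
  toFun := psumFun
  map_one' := by
    rw [psumFun_eq (1 : Profile) (N := 1) (fun i hi => if_neg (by omega))]
    simp [one_toFun, oneFun]
  map_zero' := by
    show psumFun 0 = 0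
    rw [psumFun_eq (0 : Profile) (N := 0) (fun i _ => rfl)]
    simp
  map_add' p q := by
    show psumFun (p + q) = psumFun p + psumFun q
    obtain ⟨N, hN⟩ := p.exists_bound
    obtain ⟨M, hM⟩ := q.exists_bound
    have hpq : ∀ i, max N M ≤ i → (p + q).toFun i = 0 := by
      intro i hi
      show addFun p.toFun q.toFun i = 0
      simp [addFun, hN i (le_trans (le_max_left _ _) hi),
        hM i (le_trans (le_max_right _ _) hi)]
    rw [psumFun_eq _ hpq,
      psumFun_eq p (N := max N M) (fun i hi => hN i (le_trans (le_max_left _ _) hi)),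
      psumFun_eq q (N := max N M) (fun i hi => hM i (le_trans (le_max_right _ _) hi))]
    simp [add_toFun, addFun, Finset.sum_add_distrib]
  map_mul' p q := by
    show psumFun (p * q) = psumFun p * psumFun q
    obtain ⟨N, hN⟩ := p.exists_bound
    obtain ⟨M, hM⟩ := q.exists_bound
    have hp : ∀ i, max N M ≤ i → p.toFun i = 0 :=
      fun i hi => hN i (le_trans (le_max_left _ _) hi)
    have hq : ∀ i, max N M ≤ i → q.toFun i = 0 :=
      fun i hi => hM i (le_trans (le_max_right _ _) hi)
    have hpq : ∀ i, max N M ≤ i → (p * q).toFun i = 0 := by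
      intro i hi
      show mulFun p.toFun q.toFun i = 0
      simp [mulFun, hp i hi, hq i hi]
    rw [psumFun_eq _ hpq, psumFun_eq p hp, psumFun_eq q hq]
    exact sum_mulFun p.toFun q.toFun (max N M)

theorem psum_phi (n : ℕ) : psum (phi n) = n := by
  show psumFun (phiProfile n) = n
  rw [psumFun_eq (phiProfile n) (N := 1) (fun i hi => if_neg (by omega))]
  simp [phiProfile]

theorem psum_comp_phi : psum.comp phi = RingHom.id ℕ := RingHom.ext psum_phi

/-- A polynomial equation `p = q` with natural coefficients has a solution in
the semiring of profiles (after mapping the coefficients along `φ`) if and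
only if it has a solution in `ℕ`. -/
theorem equation_solvable_iff {σ : Type*} (p q : MvPolynomial σ ℕ) :
    (∃ r : σ → Profile,
        MvPolynomial.eval r (MvPolynomial.map phi p) =
          MvPolynomial.eval r (MvPolynomial.map phi q)) ↔
      (∃ s : σ → ℕ, MvPolynomial.eval s p = MvPolynomial.eval s q) := by
  constructor
  · rintro ⟨r, hr⟩
    refine ⟨fun x => psum (r x), ?_⟩
    have key : ∀ t : MvPolynomial σ ℕ,
        MvPolynomial.eval (fun x => psum (r x)) t =
          psum (MvPolynomial.eval r (MvPolynomial.map phi t)) := by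
      intro t
      rw [MvPolynomial.eval_map, MvPolynomial.eval₂_comp_left psum phi r t]
      rw [psum_comp_phi]
      rfl
    rw [key p, key q, hr]
  · rintro ⟨s, hs⟩
    refine ⟨fun x => phi (s x), ?_⟩
    have key : ∀ t : MvPolynomial σ ℕ,
        MvPolynomial.eval (fun x => phi (s x)) (MvPolynomial.map phi t) =
          phi (MvPolynomial.eval s t) := by
      intro t
      rw [MvPolynomial.eval_map,
        show MvPolynomial.eval s t = MvPolynomial.eval₂ (RingHom.id ℕ) s t from rfl,
        MvPolynomial.eval₂_comp_left phi, RingHom.comp_id]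
      rfl
    rw [key p, key q, hs]

end Profile
end

section
/- Let p be a multivariate polynomial over the semiring P of profiles in m variables and let q ∈ P be a constant. If the equation p(X_1, …, X_m) = q has a solution in P, then it has a solution (s_1, …, s_m) ∈ P^m that is componentwise bounded by q: eval (s_1, …, s_m) p = q and s_i(j) ≤ q(j) for all 1 ≤ i ≤ m and all j ∈ ℕ. -/
open Finset

namespace Profile

/-- Pointwise minimum of two profiles. -/
def pmin (u v : Profile) : Profile where
  toFun := fun j => min (u.toFun j) (v.toFun j)
  exists_bound := by
    obtain ⟨N, hN⟩ := u.exists_bound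
    exact ⟨N, fun i hi => by simp [hN i hi]⟩
  zero_succ := by
    intro i h
    have h2 : min (u.toFun i) (v.toFun i) = 0 := h
    show min (u.toFun (i + 1)) (v.toFun (i + 1)) = 0
    rcases Nat.le_total (u.toFun i) (v.toFun i) with hle | hle
    · rw [min_eq_left hle] at h2
      rw [u.zero_succ i h2]
      exact Nat.zero_min _
    · rw [min_eq_right hle] at h2
      rw [v.zero_succ i h2]
      exact Nat.min_zero _

theorem eq_zero_of_toFun_zero {u : Profile} (h : u.toFun 0 = 0) : u = 0 :=
  ext' fun i => u.zero_mono (Nat.zero_le i) h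

theorem toFun_zero_pos {u : Profile} (h : u ≠ 0) : 1 ≤ u.toFun 0 := by
  rcases Nat.eq_zero_or_pos (u.toFun 0) with h0 | h0
  · exact absurd (eq_zero_of_toFun_zero h0) h
  · exact h0

theorem mul_toFun_zero (u v : Profile) :
    (u * v).toFun 0 = u.toFun 0 * v.toFun 0 := by
  show mulFun u.toFun v.toFun 0 = _
  rw [mulFun_eq]
  simp [Nat.mul_comm]

instance : NoZeroDivisors Profile := by
  constructor
  intro u v h
  by_contra hc
  push_neg at hc
  have h0 : (u * v).toFun 0 = (0 : Profile).toFun 0 :=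
    congrArg (fun w => Profile.toFun w 0) h
  rw [mul_toFun_zero] at h0
  have hu := toFun_zero_pos hc.1
  have hv := toFun_zero_pos hc.2
  simp only [zero_toFun] at h0
  nlinarith

instance : Nontrivial Profile := by
  refine ⟨0, 1, fun h => ?_⟩
  have := congrArg (fun w => Profile.toFun w 0) h
  simp [zero_toFun, one_toFun, oneFun] at this

theorem le_mul_toFun {v : Profile} (u : Profile) (hv : v ≠ 0) (j : ℕ) :
    u.toFun j ≤ (u * v).toFun j := by
  have hv0 := toFun_zero_pos hv
  show u.toFun j ≤ mulFun u.toFun v.toFun j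
  rw [mulFun_eq]
  match j with
  | 0 =>
    simp only [range_zero, sum_empty, Nat.mul_zero, Nat.zero_add]
    calc u.toFun 0 = 1 * u.toFun 0 := (Nat.one_mul _).symm
    _ ≤ v.toFun 0 * ∑ k ∈ range 1, u.toFun k := by
        simp only [sum_range_one]; exact Nat.mul_le_mul hv0 le_rfl
  | n + 1 =>
    have h1 : 1 ≤ ∑ k ∈ range (n + 1), v.toFun k :=
      le_trans hv0 (Finset.single_le_sum (fun k _ => Nat.zero_le _)
        (Finset.mem_range.mpr (Nat.succ_pos n)))
    calc u.toFun (n + 1) = u.toFun (n + 1) * 1 := (Nat.mul_one _).symm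
    _ ≤ u.toFun (n + 1) * ∑ k ∈ range (n + 1), v.toFun k := Nat.mul_le_mul le_rfl h1
    _ ≤ _ := Nat.le_add_right _ _

/-- The `j`-th coordinate, as an additive monoid hom. -/
def coordHom (j : ℕ) : Profile →+ ℕ where
  toFun := fun p => p.toFun j
  map_zero' := rfl
  map_add' := fun _ _ => rfl

/-- If a polynomial equation over the profiles with constant right-hand side
`q` has a solution, then it has a solution that is componentwise bounded
by `q`. -/
theorem exists_bounded_solution {m : ℕ} (p : MvPolynomial (Fin m) Profile)
    (q : Profile) (h : ∃ r : Fin m → Profile, MvPolynomial.eval r p = q) :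
    ∃ s : Fin m → Profile, MvPolynomial.eval s p = q ∧
      ∀ (i : Fin m) (j : ℕ), (s i).toFun j ≤ q.toFun j := by
  classical
  obtain ⟨r, hr⟩ := h
  refine ⟨fun i => pmin (r i) q, ?_, fun i j => min_le_right _ _⟩
  have key : ∀ t ∈ p.support,
      MvPolynomial.coeff t p * ∏ i ∈ t.support, (pmin (r i) q) ^ t i
        = MvPolynomial.coeff t p * ∏ i ∈ t.support, (r i) ^ t i := by
    intro t ht
    by_cases hz : ∀ k ∈ t.support, r k ≠ 0
    · congr 1
      refine Finset.prod_congr rfl fun i hi => ?_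
      congr 1
      apply ext'
      intro j
      show min ((r i).toFun j) (q.toFun j) = (r i).toFun j
      apply Nat.min_eq_left
      -- the term of the monomial `t` is entrywise at least `r i`
      have hti : t i ≠ 0 := Finsupp.mem_support_iff.mp hi
      have hsplit : MvPolynomial.coeff t p * ∏ k ∈ t.support, (r k) ^ t k
          = (r i) * (MvPolynomial.coeff t p * (r i) ^ (t i - 1) *
              ∏ k ∈ t.support.erase i, (r k) ^ t k) := by
        rw [← Finset.mul_prod_erase _ _ hi]
        have hpow : (r i) ^ t i = (r i) * (r i) ^ (t i - 1) := by
          conv_lhs => rw [show t i = (t i - 1) + 1 by omega]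
          rw [pow_succ]; ring
        rw [hpow]; ring
      have hW : MvPolynomial.coeff t p * (r i) ^ (t i - 1) *
          ∏ k ∈ t.support.erase i, (r k) ^ t k ≠ 0 := by
        apply mul_ne_zero
        apply mul_ne_zero
        · exact MvPolynomial.mem_support_iff.mp ht
        · exact pow_ne_zero _ (hz i hi)
        · rw [Finset.prod_ne_zero_iff]
          intro k hk
          exact pow_ne_zero _ (hz k (Finset.mem_of_mem_erase hk))
      have hterm : (r i).toFun j
          ≤ (MvPolynomial.coeff t p * ∏ k ∈ t.support, (r k) ^ t k).toFun j := by
        rw [hsplit]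
        exact le_mul_toFun _ hW j
      refine le_trans hterm ?_
      have hq : q.toFun j = ∑ d ∈ p.support,
          (MvPolynomial.coeff d p * ∏ k ∈ d.support, (r k) ^ d k).toFun j := by
        rw [← hr, MvPolynomial.eval_eq]
        exact map_sum (coordHom j) _ _
      rw [hq]
      exact Finset.single_le_sum (f := fun d =>
        (MvPolynomial.coeff d p * ∏ k ∈ d.support, (r k) ^ d k).toFun j)
        (fun d _ => Nat.zero_le _) ht
    · push_neg at hz
      obtain ⟨k, hk, hk0⟩ := hz
      have hsk : pmin (r k) q = 0 := by
        apply ext'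
        intro j
        show min ((r k).toFun j) (q.toFun j) = (0 : Profile).toFun j
        rw [hk0]
        show min ((0 : Profile).toFun j) _ = _
        simp [zero_toFun]
      have htk : t k ≠ 0 := Finsupp.mem_support_iff.mp hk
      rw [Finset.prod_eq_zero hk (by rw [hsk]; exact zero_pow htk),
        Finset.prod_eq_zero hk (by rw [hk0]; exact zero_pow htk)]
  calc MvPolynomial.eval (fun i => pmin (r i) q) p
      = MvPolynomial.eval r p := by
        rw [MvPolynomial.eval_eq, MvPolynomial.eval_eq]
        exact Finset.sum_congr rfl key
    _ = q := hr

end Profile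
end
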